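/- Let X = ℝ₊ × ℝ, where the first component is a positive real and the second an arbitrary real, and let R : X³ → X³ be the map obtained from the translation invariants of the discrete potential KP equation, sending ((x₁,y₁),(x₂,y₂),(x₃,y₃)) to ((u₁,v₁),(u₂,v₂),(u₃,v₃)) with u₁ = x₁·x₂/(x₁+x₃), u₂ = x₁+x₃, u₃ = x₂·x₃/(x₁+x₃), v₁ = x₃ + y₂, v₂ = (x₁·y₁ + x₃·y₃)/(x₁+x₃), v₃ = y₂ − x₁ (well defined since x₁+x₃ > 0 and the x-components of the image are positive). Then R satisfies the functional tetrahedron equation. -/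

import Mathlib

/-- Apply `R` to components 1, 2, 3 of a 6-tuple. -/
def map123 {X : Type*} (R : X × X × X → X × X × X) :
    X × X × X × X × X × X → X × X × X × X × X × X :=
  fun (x1, x2, x3, x4, x5, x6) =>
    ((R (x1, x2, x3)).1, (R (x1, x2, x3)).2.1, (R (x1, x2, x3)).2.2, x4, x5, x6)

/-- Apply `R` to components 1, 4, 5 of a 6-tuple. -/
def map145 {X : Type*} (R : X × X × X → X × X × X) :
    X × X × X × X × X × X → X × X × X × X × X × X :=
  fun (x1, x2, x3, x4, x5, x6) =>
    ((R (x1, x4, x5)).1, x2, x3, (R (x1, x4, x5)).2.1, (R (x1, x4, x5)).2.2, x6)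

/-- Apply `R` to components 2, 4, 6 of a 6-tuple. -/
def map246 {X : Type*} (R : X × X × X → X × X × X) :
    X × X × X × X × X × X → X × X × X × X × X × X :=
  fun (x1, x2, x3, x4, x5, x6) =>
    (x1, (R (x2, x4, x6)).1, x3, (R (x2, x4, x6)).2.1, x5, (R (x2, x4, x6)).2.2)

/-- Apply `R` to components 3, 5, 6 of a 6-tuple. -/
def map356 {X : Type*} (R : X × X × X → X × X × X) :
    X × X × X × X × X × X → X × X × X × X × X × X :=
  fun (x1, x2, x3, x4, x5, x6) =>
    (x1, x2, (R (x3, x5, x6)).1, x4, (R (x3, x5, x6)).2.1, (R (x3, x5, x6)).2.2)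

/-- The functional tetrahedron equation. -/
def IsTetrahedron {X : Type*} (R : X × X × X → X × X × X) : Prop :=
  map123 R ∘ map145 R ∘ map246 R ∘ map356 R =
    map356 R ∘ map246 R ∘ map145 R ∘ map123 R

/-- The positive real numbers. -/
abbrev PReal : Type := {x : ℝ // 0 < x}

/-- The tetrahedron map from the translation invariants of discrete potential KP,
on `ℝ₊ × ℝ`. -/
noncomputable def dpKPMap :
    (PReal × ℝ) × (PReal × ℝ) × (PReal × ℝ) → (PReal × ℝ) × (PReal × ℝ) × (PReal × ℝ) :=
  fun ((⟨x1, hx1⟩, y1), (⟨x2, hx2⟩, y2), (⟨x3, hx3⟩, y3)) =>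
    ((⟨x1 * x2 / (x1 + x3), by positivity⟩, x3 + y2),
     (⟨x1 + x3, by positivity⟩, (x1 * y1 + x3 * y3) / (x1 + x3)),
     (⟨x2 * x3 / (x1 + x3), by positivity⟩, y2 - x1))

/-!
The `PReal`-components of `dpKPMap` evolve on their own, by the map `dpKPBaseMap` on `ℝ₊³`
(with the semifield operations of `ℝ₊`), and this base map is itself a tetrahedron map. The
tetrahedron equation of a map descends along any componentwise semiconjugacy, so both sides of
the equation for `dpKPMap` already agree in their `PReal`-components, and only the real
components remain to be compared. In both checks every denominator is a subtraction-free
expression in the positive `x`'s, so clearing denominators reduces each comparison to a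
polynomial identity.
-/

open Function

section Semiconj

variable {X Y : Type*}

abbrev map3 (f : X → Y) : X × X × X → Y × Y × Y := Prod.map f (Prod.map f f)

abbrev map6 (f : X → Y) : X × X × X × X × X × X → Y × Y × Y × Y × Y × Y :=
  Prod.map f (Prod.map f (Prod.map f (Prod.map f (Prod.map f f))))

variable {f : X → Y} {R : X × X × X → X × X × X} {S : Y × Y × Y → Y × Y × Y}

theorem Function.Semiconj.map123 (h : Semiconj (map3 f) R S) :
    Semiconj (map6 f) (map123 R) (map123 S) := by
  rintro ⟨a1, a2, a3, a4, a5, a6⟩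
  have := h (a1, a2, a3)
  simp_all [_root_.map123, Prod.ext_iff]

theorem Function.Semiconj.map145 (h : Semiconj (map3 f) R S) :
    Semiconj (map6 f) (map145 R) (map145 S) := by
  rintro ⟨a1, a2, a3, a4, a5, a6⟩
  have := h (a1, a4, a5)
  simp_all [_root_.map145, Prod.ext_iff]

theorem Function.Semiconj.map246 (h : Semiconj (map3 f) R S) :
    Semiconj (map6 f) (map246 R) (map246 S) := by
  rintro ⟨a1, a2, a3, a4, a5, a6⟩
  have := h (a2, a4, a6)
  simp_all [_root_.map246, Prod.ext_iff]

theorem Function.Semiconj.map356 (h : Semiconj (map3 f) R S) :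
    Semiconj (map6 f) (map356 R) (map356 S) := by
  rintro ⟨a1, a2, a3, a4, a5, a6⟩
  have := h (a3, a5, a6)
  simp_all [_root_.map356, Prod.ext_iff]

theorem IsTetrahedron.map6_comp_eq (hS : IsTetrahedron S) (h : Semiconj (map3 f) R S) :
    map6 f ∘ (map123 R ∘ map145 R ∘ map246 R ∘ map356 R) =
      map6 f ∘ (map356 R ∘ map246 R ∘ map145 R ∘ map123 R) := by
  rw [(h.map123.comp_right (h.map145.comp_right (h.map246.comp_right h.map356))).comp_eq,
    (h.map356.comp_right (h.map246.comp_right (h.map145.comp_right h.map123))).comp_eq, hS]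

end Semiconj

theorem map6_fst_snd_ext {A B : Type*}
    {u v : (A × B) × (A × B) × (A × B) × (A × B) × (A × B) × (A × B)}
    (h_fst : map6 Prod.fst u = map6 Prod.fst v) (h_snd : map6 Prod.snd u = map6 Prod.snd v) :
    u = v := by
  simp_all [Prod.ext_iff]

noncomputable def dpKPBaseMap : PReal × PReal × PReal → PReal × PReal × PReal :=
  fun (x1, x2, x3) => (x1 * x2 / (x1 + x3), x1 + x3, x2 * x3 / (x1 + x3))

theorem dpKPBaseMap_isTetrahedron : IsTetrahedron dpKPBaseMap := by
  funext ⟨⟨x1, h1⟩, ⟨x2, h2⟩, ⟨x3, h3⟩, ⟨x4, h4⟩, ⟨x5, h5⟩, ⟨x6, h6⟩⟩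
  simp only [comp_apply, map123, map145, map246, map356, dpKPBaseMap, Prod.mk.injEq,
    Subtype.ext_iff, Positive.val_mul, Positive.coe_add, div_eq_mul_inv, Positive.coe_inv,
    add_assoc, true_and]
  refine ⟨?_, ?_, ?_, ?_, ?_⟩ <;> field_simp <;> ring

theorem dpKPMap_semiconj_dpKPBaseMap : Semiconj (map3 Prod.fst) dpKPMap dpKPBaseMap :=
  fun _ => rfl

theorem dpKPMap_tetrahedron_snd :
    map6 Prod.snd ∘ (map123 dpKPMap ∘ map145 dpKPMap ∘ map246 dpKPMap ∘ map356 dpKPMap) =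
      map6 Prod.snd ∘ (map356 dpKPMap ∘ map246 dpKPMap ∘ map145 dpKPMap ∘ map123 dpKPMap) := by
  funext ⟨⟨⟨x1, h1⟩, y1⟩, ⟨⟨x2, h2⟩, y2⟩, ⟨⟨x3, h3⟩, y3⟩, ⟨⟨x4, h4⟩, y4⟩,
    ⟨⟨x5, h5⟩, y5⟩, ⟨⟨x6, h6⟩, y6⟩⟩
  simp only [comp_apply, map123, map145, map246, map356, dpKPMap, map6, Prod.map, Prod.mk.injEq]
  refine ⟨?_, ?_, ?_, ?_, ?_, ?_⟩ <;> field_simp <;> ring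

/-- the map obtained from the translation invariants of discrete potential
KP satisfies the functional tetrahedron equation. -/
theorem dpKPMap_tetrahedron : IsTetrahedron dpKPMap := by
  funext a
  exact map6_fst_snd_ext
    (congrFun (dpKPBaseMap_isTetrahedron.map6_comp_eq dpKPMap_semiconj_dpKPBaseMap) a)
    (congrFun dpKPMap_tetrahedron_snd a)
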